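/- Let ω ∈ ℝ^n, and for j ∈ ℤ^d let λ_j, μ_j ∈ ℂ satisfy: (a) the diophantine lower bound |i ω·l + λ_j - λ_{j'}| ≥ 2γ/(⟨l⟩^τ ⟨j⟩^τ ⟨j'⟩^τ) for all (l,j,j') with (l, j-j') ≠ (0,0); (b) the closeness bound |λ_j - μ_j| ≤ δ ⟨j⟩^{-2m} for all j, where m ≥ τ. If δ is small enough that 2Cδ N^{3τ} ≤ γ for the relevant constant C (where the indices satisfy |l|, |j-j'| ≤ N), then |i ω·l + μ_j - μ_{j'}| ≥ γ/(⟨l⟩^τ ⟨j⟩^τ ⟨j'⟩^τ) for all (l,j,j') ≠ (0,j,j) with |l|, |j-j'| ≤ N. Here the key fact to prove is: ⟨l⟩^τ ⟨j⟩^τ ⟨j'⟩^τ / min{⟨j⟩,⟨j'⟩}^{2m} ≤ C N^{3τ} whenever |l|, |j-j'| ≤ N and m ≥ τ. -/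

import Mathlib

/-!
Let `a = min ⟨j⟩ ⟨j'⟩`. Peetre's inequality `⟨x⟩ ≤ √2 ⟨y⟩ ⟨x - y⟩` and `|j - j'| ≤ N` give
`max ⟨j⟩ ⟨j'⟩ ≤ 2 N a`, and `|l| ≤ N` gives `⟨l⟩ ≤ 2 N`; hence `⟨l⟩ ⟨j⟩ ⟨j'⟩ ≤ 4 N³ a²`, and since
`a ≥ 1` and `τ ≤ m`, `(⟨l⟩ ⟨j⟩ ⟨j'⟩)^τ ≤ 4^τ N^{3τ} a^{2m}`. Both perturbations `|λ_j - μ_j|`,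
`|λ_{j'} - μ_{j'}|` are at most `δ a^{-2m}`, so together they move the divisor by at most
`2 δ 4^τ N^{3τ} / (⟨l⟩ ⟨j⟩ ⟨j'⟩)^τ ≤ γ / (⟨l⟩ ⟨j⟩ ⟨j'⟩)^τ`, half of the lower bound for `λ`.
-/

noncomputable section

/-- Japanese bracket ⟨x⟩ = (1 + |x|²)^{1/2}. -/
def jp (m : ℕ) (x : Fin m → ℤ) : ℝ := Real.sqrt (1 + ∑ i, ((x i : ℝ))^2)

/-- Euclidean norm of an integer vector. -/
def en (m : ℕ) (x : Fin m → ℤ) : ℝ := Real.sqrt (∑ i, ((x i : ℝ))^2)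

/-- The divisor i ω·l + λ_j - λ_{j'}. -/
def divisor (n d : ℕ) (ω : Fin n → ℝ) (lam : (Fin d → ℤ) → ℂ)
    (l : Fin n → ℤ) (j j' : Fin d → ℤ) : ℂ :=
  Complex.I * ((∑ i, ω i * (l i : ℝ) : ℝ) : ℂ) + lam j - lam j'

section JapaneseBracket

variable {d : ℕ}

lemma one_le_jp (x : Fin d → ℤ) : 1 ≤ jp d x :=
  Real.one_le_sqrt.mpr (le_add_of_nonneg_right (by positivity))

lemma jp_pos (x : Fin d → ℤ) : 0 < jp d x :=
  zero_lt_one.trans_le (one_le_jp x)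

lemma jp_eq_sqrt_one_add_en_sq (x : Fin d → ℤ) : jp d x = √(1 + en d x ^ 2) := by
  rw [en, Real.sq_sqrt (by positivity), jp]

lemma en_sub_comm (x y : Fin d → ℤ) : en d (x - y) = en d (y - x) := by
  simp only [en, Pi.sub_apply, Int.cast_sub]
  congr 1
  exact Finset.sum_congr rfl fun i _ ↦ by ring

lemma jp_le_sqrt_two_mul {N : ℝ} (hN : 1 ≤ N) {x : Fin d → ℤ} (hx : en d x ≤ N) :
    jp d x ≤ √2 * N := by
  have hx2 : en d x ^ 2 ≤ N ^ 2 := pow_le_pow_left₀ (Real.sqrt_nonneg _) hx 2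
  rw [jp_eq_sqrt_one_add_en_sq, ← Real.sqrt_sq (by linarith : 0 ≤ N), ← Real.sqrt_mul zero_le_two]
  exact Real.sqrt_le_sqrt (by nlinarith)

/-- Peetre's inequality. -/
lemma jp_le_sqrt_two_mul_jp_mul_jp_sub (x y : Fin d → ℤ) :
    jp d x ≤ √2 * jp d y * jp d (x - y) := by
  have hsum : ∑ i, (x i : ℝ) ^ 2
      ≤ 2 * ∑ i, (y i : ℝ) ^ 2 + 2 * ∑ i, ((x - y) i : ℝ) ^ 2 := by
    rw [Finset.mul_sum, Finset.mul_sum, ← Finset.sum_add_distrib]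
    gcongr with i
    simp only [Pi.sub_apply, Int.cast_sub]
    nlinarith [sq_nonneg ((x i : ℝ) - 2 * y i)]
  have hy : 0 ≤ ∑ i, (y i : ℝ) ^ 2 := by positivity
  have hxy : 0 ≤ ∑ i, ((x - y) i : ℝ) ^ 2 := by positivity
  rw [mul_assoc, jp, jp, jp, ← Real.sqrt_mul (by positivity), ← Real.sqrt_mul zero_le_two]
  exact Real.sqrt_le_sqrt (by nlinarith)

lemma jp_le_two_mul_mul_jp {N : ℝ} (hN : 1 ≤ N) {x y : Fin d → ℤ} (h : en d (x - y) ≤ N) :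
    jp d x ≤ 2 * N * jp d y :=
  calc jp d x ≤ √2 * jp d y * jp d (x - y) := jp_le_sqrt_two_mul_jp_mul_jp_sub x y
    _ ≤ √2 * jp d y * (√2 * N) :=
      mul_le_mul_of_nonneg_left (jp_le_sqrt_two_mul hN h) (by have := jp_pos y; positivity)
    _ = 2 * N * jp d y := by
      rw [mul_mul_mul_comm, Real.mul_self_sqrt zero_le_two]; ring

lemma max_jp_le_two_mul_min_jp {N : ℝ} (hN : 1 ≤ N) {j j' : Fin d → ℤ}
    (h : en d (j - j') ≤ N) : max (jp d j) (jp d j') ≤ 2 * N * min (jp d j) (jp d j') := by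
  rcases le_total (jp d j) (jp d j') with hle | hle
  · rw [max_eq_right hle, min_eq_left hle]
    exact jp_le_two_mul_mul_jp hN (by rwa [en_sub_comm])
  · rw [max_eq_left hle, min_eq_right hle]
    exact jp_le_two_mul_mul_jp hN h

end JapaneseBracket

section Weight

variable {n d : ℕ} {τ m N : ℝ} {l : Fin n → ℤ} {j j' : Fin d → ℤ}

lemma jp_mul_jp_mul_jp_le (hN : 1 ≤ N) (hl : en n l ≤ N) (hjj : en d (j - j') ≤ N) :
    jp n l * jp d j * jp d j' ≤ 4 * N ^ 3 * min (jp d j) (jp d j') ^ 2 := by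
  set a := min (jp d j) (jp d j')
  have hl2 : jp n l ≤ 2 * N := (jp_le_sqrt_two_mul hN hl).trans <| by
    gcongr; exact Real.sqrt_le_iff.mpr ⟨by norm_num, by norm_num⟩
  have ha : 0 ≤ a := le_min (jp_pos j).le (jp_pos j').le
  calc jp n l * jp d j * jp d j' = jp n l * (a * max (jp d j) (jp d j')) := by
        rw [min_mul_max, mul_assoc]
    _ ≤ 2 * N * (a * (2 * N * a)) := by
        have hmax := max_jp_le_two_mul_min_jp hN hjj
        have hmax0 : 0 ≤ max (jp d j) (jp d j') := le_max_of_le_left (jp_pos j).le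
        have := jp_pos l
        gcongr
    _ = 4 * N ^ 2 * a ^ 2 := by ring
    _ ≤ 4 * N ^ 3 * a ^ 2 := by gcongr; norm_num

lemma jp_rpow_mul_jp_rpow_mul_jp_rpow_le (hτ : 0 ≤ τ) (hm : τ ≤ m) (hN : 1 ≤ N) (hl : en n l ≤ N)
    (hjj : en d (j - j') ≤ N) :
    jp n l ^ τ * jp d j ^ τ * jp d j' ^ τ
      ≤ 4 ^ τ * N ^ (3 * τ) * min (jp d j) (jp d j') ^ (2 * m) := by
  set a := min (jp d j) (jp d j')
  have ha : 1 ≤ a := le_min (one_le_jp j) (one_le_jp j')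
  have := jp_pos l; have := jp_pos j; have := jp_pos j'
  calc jp n l ^ τ * jp d j ^ τ * jp d j' ^ τ = (jp n l * jp d j * jp d j') ^ τ := by
        rw [Real.mul_rpow (by positivity) (by positivity), Real.mul_rpow (by positivity)
          (by positivity)]
    _ ≤ (4 * N ^ 3 * a ^ 2) ^ τ :=
        Real.rpow_le_rpow (by positivity) (jp_mul_jp_mul_jp_le hN hl hjj) hτ
    _ = 4 ^ τ * N ^ (3 * τ) * a ^ (2 * τ) := by
        rw [Real.mul_rpow (by positivity) (by positivity), Real.mul_rpow (by norm_num)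
          (by positivity), Real.rpow_mul (by linarith), Real.rpow_mul (by linarith)]
        norm_cast
    _ ≤ 4 ^ τ * N ^ (3 * τ) * a ^ (2 * m) := by
        gcongr

end Weight

lemma norm_divisor_le_norm_divisor_add {n d : ℕ} (ω : Fin n → ℝ) (lam mu : (Fin d → ℤ) → ℂ)
    (l : Fin n → ℤ) (j j' : Fin d → ℤ) :
    ‖divisor n d ω lam l j j'‖
      ≤ ‖divisor n d ω mu l j j'‖ + (‖lam j - mu j‖ + ‖lam j' - mu j'‖) := by
  have h : divisor n d ω lam l j j'
      = divisor n d ω mu l j j' + ((lam j - mu j) - (lam j' - mu j')) := by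
    simp only [divisor]; ring
  rw [h]
  exact (norm_add_le _ _).trans (add_le_add_right (norm_sub_le _ _) _)

theorem stmt_11_general (n d : ℕ) (τ m γ N : ℝ)
    (hτ : 0 < τ) (hm : τ ≤ m) (hN : 1 ≤ N) :
    ∃ C : ℝ, 0 < C ∧
      (∀ l : Fin n → ℤ, ∀ j j' : Fin d → ℤ, en n l ≤ N → en d (j - j') ≤ N →
        jp n l ^ τ * jp d j ^ τ * jp d j' ^ τ / (min (jp d j) (jp d j')) ^ (2 * m)
          ≤ C * N ^ (3 * τ)) ∧
      (∀ δ : ℝ, 0 ≤ δ → 2 * C * δ * N ^ (3 * τ) ≤ γ →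
        ∀ ω : Fin n → ℝ, ∀ lam mu : (Fin d → ℤ) → ℂ,
        (∀ l : Fin n → ℤ, ∀ j j' : Fin d → ℤ, ¬(l = 0 ∧ j = j') →
          2 * γ / (jp n l ^ τ * jp d j ^ τ * jp d j' ^ τ)
            ≤ ‖divisor n d ω lam l j j'‖) →
        (∀ j : Fin d → ℤ, ‖lam j - mu j‖ ≤ δ * jp d j ^ (-(2 * m))) →
        ∀ l : Fin n → ℤ, ∀ j j' : Fin d → ℤ, ¬(l = 0 ∧ j = j') →
          en n l ≤ N → en d (j - j') ≤ N →
          γ / (jp n l ^ τ * jp d j ^ τ * jp d j' ^ τ)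
            ≤ ‖divisor n d ω mu l j j'‖) := by
  have hratio : ∀ (l : Fin n → ℤ) (j j' : Fin d → ℤ), en n l ≤ N → en d (j - j') ≤ N →
      jp n l ^ τ * jp d j ^ τ * jp d j' ^ τ / min (jp d j) (jp d j') ^ (2 * m)
        ≤ 4 ^ τ * N ^ (3 * τ) := fun l j j' hl hjj ↦
    (div_le_iff₀ (Real.rpow_pos_of_pos (lt_min (jp_pos j) (jp_pos j')) _)).mpr
      (jp_rpow_mul_jp_rpow_mul_jp_rpow_le hτ.le hm hN hl hjj)
  refine ⟨4 ^ τ, by positivity, hratio, ?_⟩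
  intro δ hδ hsmall ω lam mu hlam hclose l j j' hne hl hjj
  set P := jp n l ^ τ * jp d j ^ τ * jp d j' ^ τ
  set a := min (jp d j) (jp d j')
  have hP : 0 < P := by have := jp_pos l; have := jp_pos j; have := jp_pos j'; positivity
  have ha : 0 < a := lt_min (jp_pos j) (jp_pos j')
  have hclose_min : ∀ k, a ≤ jp d k → ‖lam k - mu k‖ ≤ δ * a ^ (-(2 * m)) := fun k hk ↦
    (hclose k).trans <| mul_le_mul_of_nonneg_left
      (Real.rpow_le_rpow_of_nonpos ha hk (by linarith)) hδ
  -- `a ^ (-2m) = (P / a ^ (2m)) / P`, and the numerator is controlled by `hratio`.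
  have hshift : 2 * (δ * a ^ (-(2 * m))) ≤ γ / P := by
    calc 2 * (δ * a ^ (-(2 * m))) = 2 * δ * (P / a ^ (2 * m)) / P := by
          rw [Real.rpow_neg ha.le]; field_simp
      _ ≤ 2 * δ * (4 ^ τ * N ^ (3 * τ)) / P := by gcongr; exact hratio l j j' hl hjj
      _ ≤ γ / P := by gcongr; linarith
  have hlow : 2 * (γ / P) ≤ ‖divisor n d ω lam l j j'‖ := by
    rw [← mul_div_assoc]; exact hlam l j j' hne
  linarith [norm_divisor_le_norm_divisor_add ω lam mu l j j',
    hclose_min j (min_le_left _ _), hclose_min j' (min_le_right _ _)]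

/-- stability of second Melnikov conditions under perturbation of
the eigenvalues by δ⟨j⟩^{-2m}. There is a constant C > 0 such that
⟨l⟩^τ⟨j⟩^τ⟨j'⟩^τ / min(⟨j⟩,⟨j'⟩)^{2m} ≤ C N^{3τ} for |l|, |j-j'| ≤ N, and if
2 C δ N^{3τ} ≤ γ then the Melnikov lower bound 2γ/(⟨l⟩^τ⟨j⟩^τ⟨j'⟩^τ) for λ
implies the bound γ/(⟨l⟩^τ⟨j⟩^τ⟨j'⟩^τ) for any μ with |λ_j - μ_j| ≤ δ⟨j⟩^{-2m}. -/
theorem stmt_11 (n d : ℕ) (τ m γ N : ℝ)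
    (hγ : 0 < γ) (hγ1 : γ < 1) (hτ : 0 < τ) (hm : τ ≤ m) (hN : 1 ≤ N) :
    ∃ C : ℝ, 0 < C ∧
      (∀ l : Fin n → ℤ, ∀ j j' : Fin d → ℤ, en n l ≤ N → en d (j - j') ≤ N →
        jp n l ^ τ * jp d j ^ τ * jp d j' ^ τ / (min (jp d j) (jp d j')) ^ (2 * m)
          ≤ C * N ^ (3 * τ)) ∧
      (∀ δ : ℝ, 0 ≤ δ → 2 * C * δ * N ^ (3 * τ) ≤ γ →
        ∀ ω : Fin n → ℝ, ∀ lam mu : (Fin d → ℤ) → ℂ,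
        (∀ l : Fin n → ℤ, ∀ j j' : Fin d → ℤ, ¬(l = 0 ∧ j = j') →
          2 * γ / (jp n l ^ τ * jp d j ^ τ * jp d j' ^ τ)
            ≤ ‖divisor n d ω lam l j j'‖) →
        (∀ j : Fin d → ℤ, ‖lam j - mu j‖ ≤ δ * jp d j ^ (-(2 * m))) →
        ∀ l : Fin n → ℤ, ∀ j j' : Fin d → ℤ, ¬(l = 0 ∧ j = j') →
          en n l ≤ N → en d (j - j') ≤ N →
          γ / (jp n l ^ τ * jp d j ^ τ * jp d j' ^ τ)
            ≤ ‖divisor n d ω mu l j j'‖) :=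
  stmt_11_general n d τ m γ N hτ hm hN
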